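/- Let 0 < r < 1 and 0 < p, q < 1 satisfy 1/p + 1/q = log₂(2^r + 2)/r. If the inequality ‖f*g‖_{ℓ^r(ℤ^d)} ≥ ‖f‖_{ℓ^p(ℤ^d)} ‖g‖_{ℓ^q(ℤ^d)} holds for every d ≥ 1 and all f, g : ℤ^d → [0,∞) supported in {0,1}^d, then 1 / ( log₂(2^r + 2)/r − (1 + 2^{r-1})/(r + 2^{r-1}) ) ≤ p, q ≤ (r + 2^{r-1})/(1 + 2^{r-1}). -/

import Mathlib

open scoped BigOperators ENNReal

/-- Convolution of two functions on `ℤ^d`. -/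
noncomputable def cconv {d : ℕ} (f g : (Fin d → ℤ) → ℝ) : (Fin d → ℤ) → ℝ :=
  fun m => ∑' u : Fin d → ℤ, f u * g (m - u)

/-- A point of `ℤ^d` lies in the hypercube `{0,1}^d`. -/
def InCube {d : ℕ} (x : Fin d → ℤ) : Prop := ∀ i, x i = 0 ∨ x i = 1

/-- A function on `ℤ^d` is supported in `{0,1}^d`. -/
def SupportedInCube {d : ℕ} (f : (Fin d → ℤ) → ℝ) : Prop :=
  ∀ x : Fin d → ℤ, ¬ InCube x → f x = 0

/-- The `ℓ^s` norm of a function on `ℤ^d` (for `0 < s < ∞`). -/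
noncomputable def lnorm {d : ℕ} (s : ℝ) (f : (Fin d → ℤ) → ℝ) : ℝ :=
  (∑' x : Fin d → ℤ, |f x| ^ s) ^ (1 / s)

/-! Take `d = 1`, `f = (1, t)` and `g = (1, 1)` on `{0, 1}`, so that `f * g = (1, 1 + t, t)`. The
inequality becomes `(1 + t^p)^(1/p) 2^(1/q) ≤ (1 + (1 + t)^r + t^r)^(1/r)`, and the critical-line
condition `2^(1/p + 1/q) = (2^r + 2)^(1/r)` makes it an equality at `t = 1`. Hence `t = 1` maximises
`log ‖f‖_p - log ‖f * g‖_r`, whose second derivative there, `(p(1 + c) - (r + c)) / (4(1 + c))` with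
`c = 2^(r-1)`, must be `≤ 0`: this is `p ≤ (r + c)/(1 + c)`. Exchanging `f` and `g` gives the same
bound for `q`, and the lower bounds follow from `1/p + 1/q = log₂(2^r + 2)/r`. -/

open Real Filter Topology Set

theorem IsLocalMax.second_deriv_nonpos {f f' : ℝ → ℝ} {a f'' : ℝ} (h : IsLocalMax f a)
    (hf : ∀ᶠ x in 𝓝 a, HasDerivAt f (f' x) x) (hf' : HasDerivAt f' f'' a) : f'' ≤ 0 := by
  -- If `f'' > 0`, then `f' > 0` just right of `a` (where `f' a = 0`), so `f` increases there.
  by_contra! hpos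
  have hfa : f' a = 0 := h.hasDerivAt_eq_zero hf.self_of_nhds
  have hright : ∀ᶠ x in 𝓝[>] a, 0 < f' x := by
    filter_upwards [nhdsGT_le_nhdsNE a ((hasDerivAt_iff_tendsto_slope.mp hf').eventually
      (lt_mem_nhds hpos)), self_mem_nhdsWithin] with x hx hax
    rw [slope_def_field, hfa, sub_zero] at hx
    exact (div_pos_iff_of_pos_right (sub_pos.mpr hax)).mp hx
  obtain ⟨b, hab, hb⟩ := mem_nhdsGT_iff_exists_Ioc_subset.mp
    (hright.and (nhdsWithin_le_nhds (hf.and h)))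
  have hab : a < b := hab
  have hcont : ContinuousOn f (Icc a b) := by
    rintro x ⟨hax, hxb⟩
    rcases hax.eq_or_lt with rfl | hax
    · exact hf.self_of_nhds.continuousAt.continuousWithinAt
    · exact (hb ⟨hax, hxb⟩).2.1.continuousAt.continuousWithinAt
  obtain ⟨ξ, hξ, hslope⟩ := exists_hasDerivAt_eq_slope f f' hab hcont
    fun x hx => (hb ⟨hx.1, hx.2.le⟩).2.1
  have hfb : f b ≤ f a := (hb ⟨hab, le_rfl⟩).2.2
  have hξpos : 0 < f' ξ := (hb ⟨hξ.1, hξ.2.le⟩).1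
  rw [hslope] at hξpos
  have := (div_pos_iff_of_pos_right (sub_pos.mpr hab)).mp hξpos
  linarith

def liftInt (φ : ℤ → ℝ) : (Fin 1 → ℤ) → ℝ := fun x => φ (x 0)

lemma tsum_fin_one_eval (φ : ℤ → ℝ) : ∑' x : Fin 1 → ℤ, φ (x 0) = ∑' n, φ n :=
  (Equiv.funUnique (Fin 1) ℤ).tsum_eq φ

lemma lnorm_liftInt (s : ℝ) (φ : ℤ → ℝ) :
    lnorm s (liftInt φ) = (∑' n, |φ n| ^ s) ^ (1 / s) := by
  rw [lnorm, ← tsum_fin_one_eval]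
  rfl

lemma cconv_liftInt (φ ψ : ℤ → ℝ) :
    cconv (liftInt φ) (liftInt ψ) = liftInt fun m => ∑' n, φ n * ψ (m - n) :=
  funext fun m => tsum_fin_one_eval fun n => φ n * ψ (m 0 - n)

def twoPoint (a b : ℝ) : ℤ → ℝ := fun n => if n = 0 then a else if n = 1 then b else 0

lemma twoPoint_eq_zero {a b : ℝ} {n : ℤ} (h0 : n ≠ 0) (h1 : n ≠ 1) : twoPoint a b n = 0 := by
  simp [twoPoint, h0, h1]

lemma twoPoint_nonneg {a b : ℝ} (ha : 0 ≤ a) (hb : 0 ≤ b) (n : ℤ) : 0 ≤ twoPoint a b n := by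
  unfold twoPoint
  split_ifs
  exacts [ha, hb, le_rfl]

lemma supportedInCube_liftInt_twoPoint (a b : ℝ) : SupportedInCube (liftInt (twoPoint a b)) := by
  intro x hx
  have : ¬ (x 0 = 0 ∨ x 0 = 1) := fun h0 => hx fun i => Subsingleton.elim i 0 ▸ h0
  push Not at this
  exact twoPoint_eq_zero this.1 this.2

lemma tsum_twoPoint_mul (a b : ℝ) (ψ : ℤ → ℝ) (m : ℤ) :
    ∑' n, twoPoint a b n * ψ (m - n) = a * ψ m + b * ψ (m - 1) := by
  rw [tsum_eq_sum (s := {0, 1}) fun n hn => by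
    simp only [Finset.mem_insert, Finset.mem_singleton, not_or] at hn
    rw [twoPoint_eq_zero hn.1 hn.2, zero_mul]]
  simp [twoPoint]

lemma tsum_abs_twoPoint_rpow {a b s : ℝ} (ha : 0 ≤ a) (hb : 0 ≤ b) (hs : s ≠ 0) :
    ∑' n, |twoPoint a b n| ^ s = a ^ s + b ^ s := by
  rw [tsum_eq_sum (s := {0, 1}) fun n hn => by
    simp only [Finset.mem_insert, Finset.mem_singleton, not_or] at hn
    rw [twoPoint_eq_zero hn.1 hn.2, abs_zero, zero_rpow hs]]
  simp [twoPoint, abs_of_nonneg ha, abs_of_nonneg hb]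

lemma tsum_abs_conv_twoPoint_rpow {a b a' b' s : ℝ} (ha : 0 ≤ a) (hb : 0 ≤ b) (ha' : 0 ≤ a')
    (hb' : 0 ≤ b') (hs : s ≠ 0) :
    ∑' m, |a * twoPoint a' b' m + b * twoPoint a' b' (m - 1)| ^ s
      = (a * a') ^ s + (a * b' + b * a') ^ s + (b * b') ^ s := by
  rw [tsum_eq_sum (s := {0, 1, 2}) fun m hm => by
    simp only [Finset.mem_insert, Finset.mem_singleton, not_or] at hm
    rw [twoPoint_eq_zero hm.1 hm.2.1, twoPoint_eq_zero (by omega) (by omega)]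
    simp [zero_rpow hs]]
  norm_num [twoPoint, abs_of_nonneg, ha, hb, ha', hb', mul_nonneg]
  rw [abs_of_nonneg (by positivity)]
  ring

def ReverseYoungOnCube (p q r : ℝ) : Prop :=
  ∀ d : ℕ, 1 ≤ d → ∀ f g : (Fin d → ℤ) → ℝ,
    (∀ x, 0 ≤ f x) → (∀ x, 0 ≤ g x) → SupportedInCube f → SupportedInCube g →
      lnorm p f * lnorm q g ≤ lnorm r (cconv f g)

lemma cconv_comm {d : ℕ} (f g : (Fin d → ℤ) → ℝ) : cconv f g = cconv g f := by
  funext m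
  rw [cconv, cconv, ← (Equiv.subLeft m).tsum_eq]
  simp [mul_comm]

lemma ReverseYoungOnCube.symm {p q r : ℝ} (h : ReverseYoungOnCube p q r) :
    ReverseYoungOnCube q p r := fun d hd f g hf hg hfc hgc => by
  rw [mul_comm, cconv_comm]
  exact h d hd g f hg hf hgc hfc

theorem ReverseYoungOnCube.twoPoint_ineq {p q r : ℝ} (h : ReverseYoungOnCube p q r)
    (hp : p ≠ 0) (hq : q ≠ 0) (hr : r ≠ 0) {a b a' b' : ℝ} (ha : 0 ≤ a) (hb : 0 ≤ b)
    (ha' : 0 ≤ a') (hb' : 0 ≤ b') :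
    (a ^ p + b ^ p) ^ (1 / p) * (a' ^ q + b' ^ q) ^ (1 / q)
      ≤ ((a * a') ^ r + (a * b' + b * a') ^ r + (b * b') ^ r) ^ (1 / r) := by
  have := h 1 le_rfl (liftInt (twoPoint a b)) (liftInt (twoPoint a' b'))
    (fun x => twoPoint_nonneg ha hb (x 0)) (fun x => twoPoint_nonneg ha' hb' (x 0))
    (supportedInCube_liftInt_twoPoint a b) (supportedInCube_liftInt_twoPoint a' b')
  simpa only [cconv_liftInt, lnorm_liftInt, tsum_twoPoint_mul, tsum_abs_twoPoint_rpow,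
    tsum_abs_conv_twoPoint_rpow, ha, hb, ha', hb', hp, hq, hr, ne_eq, not_false_eq_true] using this

noncomputable def pairSum (r t : ℝ) : ℝ := (1 + t) ^ r + t ^ r

lemma hasDerivAt_pairSum (r : ℝ) {t : ℝ} (ht : 0 < t) :
    HasDerivAt (pairSum r) (r * pairSum (r - 1) t) t := by
  have h1 := ((hasDerivAt_id t).const_add 1).rpow_const (p := r) (Or.inl (by positivity))
  have h2 := hasDerivAt_rpow_const (p := r) (Or.inl ht.ne')
  refine (h1.add h2).congr_deriv ?_
  simp only [pairSum, id]
  ring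

lemma pairSum_one (r : ℝ) : pairSum r 1 = 2 ^ r + 1 := by
  rw [pairSum, one_rpow, one_add_one_eq_two]

/-- `log ‖f‖_p - log ‖f * g‖_r` for `f = (1, t)` and `g = (1, 1)` on `{0, 1} ⊆ ℤ`. -/
noncomputable def testGap (p r t : ℝ) : ℝ := log (1 + t ^ p) / p - log (1 + pairSum r t) / r

lemma testGap_one (p r : ℝ) : testGap p r 1 = log 2 / p - log (2 ^ r + 2) / r := by
  rw [testGap, pairSum_one, one_rpow, one_add_one_eq_two, add_comm 1, add_assoc,
    one_add_one_eq_two]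

noncomputable def testGapDeriv (p r t : ℝ) : ℝ :=
  t ^ (p - 1) / (1 + t ^ p) - pairSum (r - 1) t / (1 + pairSum r t)

lemma one_add_pairSum_pos (r : ℝ) {t : ℝ} (ht : 0 < t) : 0 < 1 + pairSum r t := by
  unfold pairSum; positivity

lemma hasDerivAt_testGap {p r t : ℝ} (hp : p ≠ 0) (hr : r ≠ 0) (ht : 0 < t) :
    HasDerivAt (testGap p r) (testGapDeriv p r t) t := by
  have hA := ((hasDerivAt_rpow_const (p := p) (Or.inl ht.ne')).const_add 1).log
    (by positivity)
  have hN := ((hasDerivAt_pairSum r ht).const_add 1).log (one_add_pairSum_pos r ht).ne'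
  refine ((hA.div_const p).sub (hN.div_const r)).congr_deriv ?_
  have := (one_add_pairSum_pos r ht).ne'
  have : 1 + t ^ p ≠ 0 := by positivity
  simp only [testGapDeriv]
  field_simp

lemma hasDerivAt_testGapDeriv_one (p r : ℝ) :
    HasDerivAt (testGapDeriv p r)
      ((p * (1 + 2 ^ (r - 1)) - (r + 2 ^ (r - 1))) / (4 * (1 + 2 ^ (r - 1)))) 1 := by
  have hu := hasDerivAt_rpow_const (x := 1) (p := p - 1) (Or.inl one_ne_zero)
  have hv := (hasDerivAt_rpow_const (x := 1) (p := p) (Or.inl one_ne_zero)).const_add 1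
  have hU := hasDerivAt_pairSum (r - 1) one_pos
  have hV := (hasDerivAt_pairSum r one_pos).const_add 1
  have hV1 : 1 + pairSum r 1 ≠ 0 := by rw [pairSum_one]; positivity
  refine ((hu.div hv (by norm_num)).sub (hU.div hV hV1)).congr_deriv ?_
  have h2r : (2 : ℝ) ^ r = 2 * 2 ^ (r - 1) := by rw [rpow_sub_one two_ne_zero]; ring
  rw [pairSum_one, pairSum_one, pairSum_one, rpow_sub_one two_ne_zero (r - 1), h2r]
  have : 0 < (2 : ℝ) ^ (r - 1) := by positivity
  simp only [one_rpow]
  field_simp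
  ring

theorem le_of_forall_testGap_le {p r : ℝ} (hp : 0 < p) (hr : 0 < r)
    (hle : ∀ t, 0 < t → testGap p r t ≤ testGap p r 1) :
    p ≤ (r + 2 ^ (r - 1)) / (1 + 2 ^ (r - 1)) := by
  have hmax : IsLocalMax (testGap p r) 1 :=
    mem_of_superset (Ioi_mem_nhds one_pos) fun t ht => hle t ht
  have hderiv : ∀ᶠ t in 𝓝 1, HasDerivAt (testGap p r) (testGapDeriv p r t) t :=
    mem_of_superset (Ioi_mem_nhds one_pos) fun t ht => hasDerivAt_testGap hp.ne' hr.ne' ht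
  have h2 := hmax.second_deriv_nonpos hderiv (hasDerivAt_testGapDeriv_one p r)
  have hnum := (div_le_iff₀ (by positivity)).mp h2
  rw [le_div_iff₀ (by positivity)]
  linarith

lemma ReverseYoungOnCube.testGap_le {p q r t : ℝ} (h : ReverseYoungOnCube p q r) (hp : 0 < p)
    (hq : 0 < q) (hr : 0 < r) (hpqr : (2 : ℝ) ^ (1 / p) * 2 ^ (1 / q) = (2 ^ r + 2) ^ (1 / r))
    (ht : 0 < t) : testGap p r t ≤ testGap p r 1 := by
  have hineq := h.twoPoint_ineq hp.ne' hq.ne' hr.ne' zero_le_one ht.le zero_le_one zero_le_one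
  simp only [one_rpow, mul_one, one_add_one_eq_two] at hineq
  have hlog := log_le_log (by positivity) hineq
  have hlog1 := congrArg log hpqr
  rw [log_mul (by positivity) (by positivity), log_rpow (by positivity), log_rpow two_pos,
    log_rpow (by positivity)] at hlog
  rw [log_mul (by positivity) (by positivity), log_rpow two_pos, log_rpow two_pos,
    log_rpow (by positivity)] at hlog1
  simp only [one_div_mul_eq_div] at hlog hlog1
  rw [testGap_one, testGap, pairSum, ← add_assoc]
  linarith

lemma le_of_one_div_add_one_div_eq {x y L a b : ℝ} (hx : 0 < x) (hy : 0 < y)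
    (hxy : 1 / x + 1 / y = L) (hyab : y ≤ b / a) : 1 / (L - a / b) ≤ x := by
  have hab : a / b ≤ 1 / y := by simpa using one_div_le_one_div_of_le hy hyab
  calc 1 / (L - a / b) ≤ 1 / (1 / x) := one_div_le_one_div_of_le (by positivity) (by linarith)
    _ = x := one_div_one_div x

theorem reverse_young_hypercube_necessary_critical_line_general (r p q : ℝ)
    (hr0 : 0 < r)
    (hp0 : 0 < p) (hq0 : 0 < q)
    (hpq : 1 / p + 1 / q = Real.logb 2 (2 ^ r + 2) / r)
    (h : ∀ d : ℕ, 1 ≤ d → ∀ f g : (Fin d → ℤ) → ℝ,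
      (∀ x, 0 ≤ f x) → (∀ x, 0 ≤ g x) →
        SupportedInCube f → SupportedInCube g →
          lnorm p f * lnorm q g ≤ lnorm r (cconv f g)) :
    1 / (Real.logb 2 (2 ^ r + 2) / r - (1 + 2 ^ (r - 1)) / (r + 2 ^ (r - 1))) ≤ p ∧
    1 / (Real.logb 2 (2 ^ r + 2) / r - (1 + 2 ^ (r - 1)) / (r + 2 ^ (r - 1))) ≤ q ∧
    p ≤ (r + 2 ^ (r - 1)) / (1 + 2 ^ (r - 1)) ∧
    q ≤ (r + 2 ^ (r - 1)) / (1 + 2 ^ (r - 1)) := by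
  have h : ReverseYoungOnCube p q r := h
  have hpqr : (2 : ℝ) ^ (1 / p) * 2 ^ (1 / q) = (2 ^ r + 2) ^ (1 / r) := by
    rw [← rpow_add two_pos, hpq, div_eq_mul_one_div, rpow_mul zero_le_two,
      rpow_logb two_pos (by norm_num) (by positivity)]
  have hpM := le_of_forall_testGap_le hp0 hr0 fun t => h.testGap_le hp0 hq0 hr0 hpqr
  have hqM := le_of_forall_testGap_le hq0 hr0 fun t =>
    h.symm.testGap_le hq0 hp0 hr0 (by rw [mul_comm, hpqr])
  exact ⟨le_of_one_div_add_one_div_eq hp0 hq0 hpq hqM,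
    le_of_one_div_add_one_div_eq hq0 hp0 (by rw [add_comm, hpq]) hpM, hpM, hqM⟩

theorem reverse_young_hypercube_necessary_critical_line (r p q : ℝ)
    (hr0 : 0 < r) (hr1 : r < 1)
    (hp0 : 0 < p) (hp1 : p < 1) (hq0 : 0 < q) (hq1 : q < 1)
    (hpq : 1 / p + 1 / q = Real.logb 2 (2 ^ r + 2) / r)
    (h : ∀ d : ℕ, 1 ≤ d → ∀ f g : (Fin d → ℤ) → ℝ,
      (∀ x, 0 ≤ f x) → (∀ x, 0 ≤ g x) →
        SupportedInCube f → SupportedInCube g →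
          lnorm p f * lnorm q g ≤ lnorm r (cconv f g)) :
    1 / (Real.logb 2 (2 ^ r + 2) / r - (1 + 2 ^ (r - 1)) / (r + 2 ^ (r - 1))) ≤ p ∧
    1 / (Real.logb 2 (2 ^ r + 2) / r - (1 + 2 ^ (r - 1)) / (r + 2 ^ (r - 1))) ≤ q ∧
    p ≤ (r + 2 ^ (r - 1)) / (1 + 2 ^ (r - 1)) ∧
    q ≤ (r + 2 ^ (r - 1)) / (1 + 2 ^ (r - 1)) :=
  reverse_young_hypercube_necessary_critical_line_general r p q hr0 hp0 hq0 hpq h
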